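/- Let X = X₁∂_{x₁} + X₂∂_{x₂} + X₃∂_{x₃} on {x₃>0} ⊂ ℝ³ with X₁ = (a₁/2)(x₁²−x₂²−x₃²) + a₂x₁x₂ + bx₁ + c₁, X₂ = (a₂/2)(x₂²−x₁²−x₃²) + a₁x₁x₂ + bx₂ + c₂, X₃ = x₃(a₁x₁+a₂x₂+b), and let ω = Σ(X_i/x₃²)dx_i. Then L_X ω = 0, i.e., d(ω(X)) + i_X(dω) = 0. -/

import Mathlib

/-- Components of the soliton field `X` on `{x₃>0} ⊂ ℝ³`. -/
noncomputable def XX1 (a₁ a₂ b c₁ x₁ x₂ x₃ : ℝ) : ℝ :=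
  a₁ / 2 * (x₁ ^ 2 - x₂ ^ 2 - x₃ ^ 2) + a₂ * x₁ * x₂ + b * x₁ + c₁
noncomputable def XX2 (a₁ a₂ b c₂ x₁ x₂ x₃ : ℝ) : ℝ :=
  a₂ / 2 * (x₂ ^ 2 - x₁ ^ 2 - x₃ ^ 2) + a₁ * x₁ * x₂ + b * x₂ + c₂
noncomputable def XX3 (a₁ a₂ b x₁ x₂ x₃ : ℝ) : ℝ := x₃ * (a₁ * x₁ + a₂ * x₂ + b)

/-- Components of `ω = Σ (Xᵢ/x₃²)dxᵢ`. -/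
noncomputable def ow1 (a₁ a₂ b c₁ x₁ x₂ x₃ : ℝ) : ℝ := XX1 a₁ a₂ b c₁ x₁ x₂ x₃ / x₃ ^ 2
noncomputable def ow2 (a₁ a₂ b c₂ x₁ x₂ x₃ : ℝ) : ℝ := XX2 a₁ a₂ b c₂ x₁ x₂ x₃ / x₃ ^ 2
noncomputable def ow3 (a₁ a₂ b x₁ x₂ x₃ : ℝ) : ℝ := XX3 a₁ a₂ b x₁ x₂ x₃ / x₃ ^ 2

/-- `i_X ω = ω(X) = (X₁² + X₂² + X₃²)/x₃²`. -/
noncomputable def fC (a₁ a₂ b c₁ c₂ x₁ x₂ x₃ : ℝ) : ℝ :=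
  (XX1 a₁ a₂ b c₁ x₁ x₂ x₃ ^ 2 + XX2 a₁ a₂ b c₂ x₁ x₂ x₃ ^ 2 +
    XX3 a₁ a₂ b x₁ x₂ x₃ ^ 2) / x₃ ^ 2

/-- Coefficients of `dω = A dx₁∧dx₂ + B dx₁∧dx₃ + C dx₂∧dx₃`. -/
noncomputable def Aco (a₁ a₂ b c₁ c₂ x₁ x₂ x₃ : ℝ) : ℝ :=
  deriv (fun s => ow2 a₁ a₂ b c₂ s x₂ x₃) x₁ - deriv (fun s => ow1 a₁ a₂ b c₁ x₁ s x₃) x₂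
noncomputable def Bco (a₁ a₂ b c₁ c₂ x₁ x₂ x₃ : ℝ) : ℝ :=
  deriv (fun s => ow3 a₁ a₂ b s x₂ x₃) x₁ - deriv (fun s => ow1 a₁ a₂ b c₁ x₁ x₂ s) x₃
noncomputable def Cco (a₁ a₂ b c₁ c₂ x₁ x₂ x₃ : ℝ) : ℝ :=
  deriv (fun s => ow3 a₁ a₂ b x₁ s x₃) x₂ - deriv (fun s => ow2 a₁ a₂ b c₂ x₁ x₂ s) x₃

/-!
`X` is a Killing field of the hyperbolic metric `g = |dx|² / x₃²` on the upper half space (its flow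
consists of Möbius maps: translations for `c`, dilations for `b`, special conformal maps for `a`) and
`ω = g(X, ·)`, so `L_X ω = (L_X g)(X, ·) = 0`. The verification is a computation: the partial
derivatives of the `Xᵢ` are affine, which gives closed forms for `dω` and `d(ω(X))`, and each
component of `L_X ω` becomes a polynomial identity once `x₃` is cleared.
-/

lemma hasDerivAt_of_eq_quadratic {f : ℝ → ℝ} (p q r : ℝ) (hf : ∀ t, f t = p * t ^ 2 + q * t + r)
    (x : ℝ) : HasDerivAt f (2 * p * x + q) x := by
  rw [show f = fun t => p * t ^ 2 + q * t + r from funext hf]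
  exact ((((hasDerivAt_pow 2 x).const_mul p).add ((hasDerivAt_id x).const_mul q)).add_const r
    ).congr_deriv (by simp only [Nat.cast_ofNat, Nat.add_one_sub_one, pow_one]; ring)

lemma hasDerivAt_div_sq {f : ℝ → ℝ} {f' x : ℝ} (hf : HasDerivAt f f' x) (hx : x ≠ 0) :
    HasDerivAt (fun t => f t / t ^ 2) ((f' * x - 2 * f x) / x ^ 3) x := by
  refine (hf.div (hasDerivAt_pow 2 x) (pow_ne_zero 2 hx)).congr_deriv ?_
  field_simp
  ring

lemma hasDerivAt_sq_add_sq_add_sq {u v w : ℝ → ℝ} {u' v' w' x : ℝ} (hu : HasDerivAt u u' x)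
    (hv : HasDerivAt v v' x) (hw : HasDerivAt w w' x) :
    HasDerivAt (fun t => u t ^ 2 + v t ^ 2 + w t ^ 2) (2 * (u x * u' + v x * v' + w x * w')) x :=
  (((hu.pow 2).add (hv.pow 2)).add (hw.pow 2)).congr_deriv
    (by simp only [Nat.cast_ofNat, Nat.add_one_sub_one, pow_one]; ring)

section SolitonField

variable (a₁ a₂ b c₁ c₂ x₁ x₂ x₃ : ℝ)

lemma hasDerivAt_XX1_x₁ :
    HasDerivAt (fun s => XX1 a₁ a₂ b c₁ s x₂ x₃) (a₁ * x₁ + a₂ * x₂ + b) x₁ :=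
  (hasDerivAt_of_eq_quadratic (a₁ / 2) (a₂ * x₂ + b) (c₁ - a₁ / 2 * (x₂ ^ 2 + x₃ ^ 2))
    (fun t => by simp only [XX1]; ring) x₁).congr_deriv (by ring)

lemma hasDerivAt_XX1_x₂ :
    HasDerivAt (fun s => XX1 a₁ a₂ b c₁ x₁ s x₃) (a₂ * x₁ - a₁ * x₂) x₂ :=
  (hasDerivAt_of_eq_quadratic (-(a₁ / 2)) (a₂ * x₁) (c₁ + b * x₁ + a₁ / 2 * (x₁ ^ 2 - x₃ ^ 2))
    (fun t => by simp only [XX1]; ring) x₂).congr_deriv (by ring)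

lemma hasDerivAt_XX1_x₃ :
    HasDerivAt (fun s => XX1 a₁ a₂ b c₁ x₁ x₂ s) (-(a₁ * x₃)) x₃ :=
  (hasDerivAt_of_eq_quadratic (-(a₁ / 2)) 0 (XX1 a₁ a₂ b c₁ x₁ x₂ 0)
    (fun t => by simp only [XX1]; ring) x₃).congr_deriv (by ring)

lemma hasDerivAt_XX2_x₁ :
    HasDerivAt (fun s => XX2 a₁ a₂ b c₂ s x₂ x₃) (a₁ * x₂ - a₂ * x₁) x₁ :=
  (hasDerivAt_of_eq_quadratic (-(a₂ / 2)) (a₁ * x₂) (c₂ + b * x₂ + a₂ / 2 * (x₂ ^ 2 - x₃ ^ 2))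
    (fun t => by simp only [XX2]; ring) x₁).congr_deriv (by ring)

lemma hasDerivAt_XX2_x₂ :
    HasDerivAt (fun s => XX2 a₁ a₂ b c₂ x₁ s x₃) (a₁ * x₁ + a₂ * x₂ + b) x₂ :=
  (hasDerivAt_of_eq_quadratic (a₂ / 2) (a₁ * x₁ + b) (c₂ - a₂ / 2 * (x₁ ^ 2 + x₃ ^ 2))
    (fun t => by simp only [XX2]; ring) x₂).congr_deriv (by ring)

lemma hasDerivAt_XX2_x₃ :
    HasDerivAt (fun s => XX2 a₁ a₂ b c₂ x₁ x₂ s) (-(a₂ * x₃)) x₃ :=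
  (hasDerivAt_of_eq_quadratic (-(a₂ / 2)) 0 (XX2 a₁ a₂ b c₂ x₁ x₂ 0)
    (fun t => by simp only [XX2]; ring) x₃).congr_deriv (by ring)

lemma hasDerivAt_XX3_x₁ : HasDerivAt (fun s => XX3 a₁ a₂ b s x₂ x₃) (a₁ * x₃) x₁ :=
  (hasDerivAt_of_eq_quadratic 0 (a₁ * x₃) (x₃ * (a₂ * x₂ + b))
    (fun t => by simp only [XX3]; ring) x₁).congr_deriv (by ring)

lemma hasDerivAt_XX3_x₂ : HasDerivAt (fun s => XX3 a₁ a₂ b x₁ s x₃) (a₂ * x₃) x₂ :=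
  (hasDerivAt_of_eq_quadratic 0 (a₂ * x₃) (x₃ * (a₁ * x₁ + b))
    (fun t => by simp only [XX3]; ring) x₂).congr_deriv (by ring)

lemma hasDerivAt_XX3_x₃ :
    HasDerivAt (fun s => XX3 a₁ a₂ b x₁ x₂ s) (a₁ * x₁ + a₂ * x₂ + b) x₃ :=
  (hasDerivAt_of_eq_quadratic 0 (a₁ * x₁ + a₂ * x₂ + b) 0
    (fun t => by simp only [XX3]; ring) x₃).congr_deriv (by ring)

lemma Aco_eq : Aco a₁ a₂ b c₁ c₂ x₁ x₂ x₃ = 2 * (a₁ * x₂ - a₂ * x₁) / x₃ ^ 2 := by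
  simp only [Aco, ow1, ow2]
  rw [((hasDerivAt_XX2_x₁ ..).div_const _).deriv, ((hasDerivAt_XX1_x₂ ..).div_const _).deriv]
  ring

lemma Bco_eq (hx : x₃ ≠ 0) :
    Bco a₁ a₂ b c₁ c₂ x₁ x₂ x₃ = 2 * (a₁ * x₃ ^ 2 + XX1 a₁ a₂ b c₁ x₁ x₂ x₃) / x₃ ^ 3 := by
  simp only [Bco, ow1, ow3]
  rw [((hasDerivAt_XX3_x₁ ..).div_const _).deriv,
    (hasDerivAt_div_sq (hasDerivAt_XX1_x₃ ..) hx).deriv]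
  field_simp
  ring

lemma Cco_eq (hx : x₃ ≠ 0) :
    Cco a₁ a₂ b c₁ c₂ x₁ x₂ x₃ = 2 * (a₂ * x₃ ^ 2 + XX2 a₁ a₂ b c₂ x₁ x₂ x₃) / x₃ ^ 3 := by
  simp only [Cco, ow2, ow3]
  rw [((hasDerivAt_XX3_x₂ ..).div_const _).deriv,
    (hasDerivAt_div_sq (hasDerivAt_XX2_x₃ ..) hx).deriv]
  field_simp
  ring

lemma hasDerivAt_fC_x₁ :
    HasDerivAt (fun s => fC a₁ a₂ b c₁ c₂ s x₂ x₃)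
      (2 * (XX1 a₁ a₂ b c₁ x₁ x₂ x₃ * (a₁ * x₁ + a₂ * x₂ + b) +
        XX2 a₁ a₂ b c₂ x₁ x₂ x₃ * (a₁ * x₂ - a₂ * x₁) + XX3 a₁ a₂ b x₁ x₂ x₃ * (a₁ * x₃)) /
          x₃ ^ 2) x₁ :=
  (hasDerivAt_sq_add_sq_add_sq (hasDerivAt_XX1_x₁ ..) (hasDerivAt_XX2_x₁ ..)
    (hasDerivAt_XX3_x₁ ..)).div_const _

lemma hasDerivAt_fC_x₂ :
    HasDerivAt (fun s => fC a₁ a₂ b c₁ c₂ x₁ s x₃)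
      (2 * (XX1 a₁ a₂ b c₁ x₁ x₂ x₃ * (a₂ * x₁ - a₁ * x₂) +
        XX2 a₁ a₂ b c₂ x₁ x₂ x₃ * (a₁ * x₁ + a₂ * x₂ + b) + XX3 a₁ a₂ b x₁ x₂ x₃ * (a₂ * x₃)) /
          x₃ ^ 2) x₂ :=
  (hasDerivAt_sq_add_sq_add_sq (hasDerivAt_XX1_x₂ ..) (hasDerivAt_XX2_x₂ ..)
    (hasDerivAt_XX3_x₂ ..)).div_const _

lemma hasDerivAt_fC_x₃ (hx : x₃ ≠ 0) :
    HasDerivAt (fun s => fC a₁ a₂ b c₁ c₂ x₁ x₂ s)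
      ((2 * (XX1 a₁ a₂ b c₁ x₁ x₂ x₃ * -(a₁ * x₃) + XX2 a₁ a₂ b c₂ x₁ x₂ x₃ * -(a₂ * x₃) +
        XX3 a₁ a₂ b x₁ x₂ x₃ * (a₁ * x₁ + a₂ * x₂ + b)) * x₃ -
          2 * (XX1 a₁ a₂ b c₁ x₁ x₂ x₃ ^ 2 + XX2 a₁ a₂ b c₂ x₁ x₂ x₃ ^ 2 +
            XX3 a₁ a₂ b x₁ x₂ x₃ ^ 2)) / x₃ ^ 3) x₃ :=
  hasDerivAt_div_sq (hasDerivAt_sq_add_sq_add_sq (hasDerivAt_XX1_x₃ ..) (hasDerivAt_XX2_x₃ ..)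
    (hasDerivAt_XX3_x₃ ..)) hx

end SolitonField

/-- `i_X(dω) = (−AX₂ − BX₃)dx₁ + (AX₁ − CX₃)dx₂ + (BX₁ + CX₂)dx₃`. -/
theorem stmt11 (a₁ a₂ b c₁ c₂ : ℝ) (x₁ x₂ x₃ : ℝ) (h : 0 < x₃) :
    deriv (fun s => fC a₁ a₂ b c₁ c₂ s x₂ x₃) x₁ +
      (-(Aco a₁ a₂ b c₁ c₂ x₁ x₂ x₃ * XX2 a₁ a₂ b c₂ x₁ x₂ x₃) -
        Bco a₁ a₂ b c₁ c₂ x₁ x₂ x₃ * XX3 a₁ a₂ b x₁ x₂ x₃) = 0 ∧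
    deriv (fun s => fC a₁ a₂ b c₁ c₂ x₁ s x₃) x₂ +
      (Aco a₁ a₂ b c₁ c₂ x₁ x₂ x₃ * XX1 a₁ a₂ b c₁ x₁ x₂ x₃ -
        Cco a₁ a₂ b c₁ c₂ x₁ x₂ x₃ * XX3 a₁ a₂ b x₁ x₂ x₃) = 0 ∧
    deriv (fun s => fC a₁ a₂ b c₁ c₂ x₁ x₂ s) x₃ +
      (Bco a₁ a₂ b c₁ c₂ x₁ x₂ x₃ * XX1 a₁ a₂ b c₁ x₁ x₂ x₃ +
        Cco a₁ a₂ b c₁ c₂ x₁ x₂ x₃ * XX2 a₁ a₂ b c₂ x₁ x₂ x₃) = 0 := by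
  have hx : x₃ ≠ 0 := h.ne'
  rw [Aco_eq, Bco_eq a₁ a₂ b c₁ c₂ x₁ x₂ x₃ hx, Cco_eq a₁ a₂ b c₁ c₂ x₁ x₂ x₃ hx,
    (hasDerivAt_fC_x₁ ..).deriv, (hasDerivAt_fC_x₂ ..).deriv,
    (hasDerivAt_fC_x₃ a₁ a₂ b c₁ c₂ x₁ x₂ x₃ hx).deriv]
  refine ⟨?_, ?_, ?_⟩ <;> simp only [XX1, XX2, XX3] <;> field_simp <;> ring
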